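/- arXiv:1310.4093 — 3 statements merged into one kernel-verified Lean document; each statement's English description precedes it below -/
import Mathlib

section
/- The edge-weighted hook formula ∑_{T∈U_r} ∏_{v=2}^r ( x_{f_T(v)} ∑_{u∈h_T(v)} y_{v,u} ) = x_1 y_{r,r} ∏_{i=2}^{r−1} ( (∑_{j≤i} x_j) y_{i,i} + ∑_{j>i} x_i y_{i,j} ) specializes, under the substitution y_{v,u} = x_u − 1 for v < u and y_{u,u} = x_u, to the identity ∑_{T∈U_r} ∏_{v=2}^r x_{f_T(v)}((∑_{u∈h_T(v)} x_u) − h_T(v) + 1) = x_1⋯x_r (x_1+⋯+x_r−1)_{r−2}. -/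
open scoped Classical

/-- An unordered increasing tree on the vertex set `{1,…,r}` (vertex `i+1` is
represented by `(i : Fin r)`): a parent function `p` with `p 1 = 1` (index `0`)
and `f_T(v) < v` for every nonroot vertex `v`; the root is `1`. -/
def IncTree (r : ℕ) : Type :=
  {p : Fin r → Fin r // ∀ v : Fin r, (v.val = 0 → p v = v) ∧ (v.val ≠ 0 → p v < v)}

noncomputable instance (r : ℕ) : Fintype (IncTree r) := by
  unfold IncTree; infer_instance

/-- The hook `h_T(v)` of a vertex `v` (as a set): `v` together with all of its
descendants, i.e. all `u` some iterated parent of which is `v`. -/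
noncomputable def hook {r : ℕ} (p : Fin r → Fin r) (v : Fin r) : Finset (Fin r) :=
  Finset.univ.filter (fun u => ∃ k ∈ Finset.range (r + 1), p^[k] u = v)

/-- The indeterminate `x_n`, in `MvPolynomial ℕ ℤ`. -/
noncomputable def x (n : ℕ) : MvPolynomial ℕ ℤ := MvPolynomial.X n

/-- The specialization of the edge weights: `y_{v,u} = x_u - 1` for `v < u`,
and `y_{u,u} = x_u`. -/
noncomputable def Y (v u : ℕ) : MvPolynomial ℕ ℤ := if v = u then x u else x u - 1

/-! Both sides specialize factor by factor. Since `v` lies in its own hook, the weights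
`y_{v,u}` summed over `h_T(v)` give `∑ x_u - |h_T(v)| + 1`. With `S = x_1 + ⋯ + x_r`, the `i`-th
factor on the right becomes `x_i (S - (r - i))`, and `i ↦ r - 1 - i` turns the product of the
`S - (r - i)` into the falling factorial `(S - 1)_{r-2}`. -/

open Finset

section Intervals

variable {R : Type*} [CommRing R]

lemma sum_Icc_mul_add_sum_Icc_mul_sub_one (f : ℕ → R) {i r : ℕ} (hi : i ≤ r) :
    (∑ j ∈ Icc 1 i, f j) * f i + ∑ j ∈ Icc (i + 1) r, f i * (f j - 1)
      = f i * (∑ j ∈ Icc 1 r, f j - ((r - i : ℕ) : R)) := by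
  have hIcc : ∀ n, Icc 1 n = Ioc 0 n := Icc_add_one_left_eq_Ioc 0
  rw [← mul_sum, sum_sub_distrib, sum_const, Icc_add_one_left_eq_Ioc, Nat.card_Ioc, nsmul_one,
    hIcc, hIcc, ← sum_Ioc_consecutive f (Nat.zero_le i) hi]
  ring

lemma prod_Icc_one_eq_mul_mul_prod_Icc_two {M : Type*} [CommMonoid M] (f : ℕ → M) {r : ℕ}
    (hr : 2 ≤ r) : ∏ i ∈ Icc 1 r, f i = f 1 * f r * ∏ i ∈ Icc 2 (r - 1), f i := by
  rw [← insert_Icc_add_one_left_eq_Icc (by omega : 1 ≤ r), prod_insert (by simp),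
    one_add_one_eq_two, ← insert_Icc_sub_one_right_eq_Icc hr, prod_insert (by simp; omega),
    mul_assoc]

lemma prod_Icc_two_sub_eq_prod_range {M : Type*} [CommMonoid M] (g : ℕ → M) (r : ℕ) :
    ∏ i ∈ Icc 2 (r - 1), g (r - i) = ∏ j ∈ range (r - 2), g (j + 1) := by
  refine prod_nbij' (fun i => r - 1 - i) (fun j => r - 1 - j) ?_ ?_ ?_ ?_ ?_ <;>
    intro i hi <;> simp only [mem_Icc, mem_range] at hi ⊢
  all_goals first | omega | (congr 1; omega)

end Intervals

lemma mem_hook_self {r : ℕ} (p : Fin r → Fin r) (v : Fin r) : v ∈ hook p v := by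
  simp only [hook, mem_filter, mem_univ, true_and]
  exact ⟨0, by simp, rfl⟩

lemma Y_eq_x_sub_one_add_ite (v u : ℕ) : Y v u = x u - 1 + if v = u then 1 else 0 := by
  unfold Y; split_ifs <;> ring

lemma sum_Y_eq_sum_x_sub_card_add_one {r : ℕ} {v : Fin r} {s : Finset (Fin r)} (hv : v ∈ s) :
    ∑ u ∈ s, Y (v.val + 1) (u.val + 1)
      = (∑ u ∈ s, x (u.val + 1)) - (s.card : MvPolynomial ℕ ℤ) + 1 := by
  simp only [Y_eq_x_sub_one_add_ite, add_left_inj, ← Fin.ext_iff, sum_add_distrib,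
    sum_ite_eq, hv, if_true, sum_sub_distrib, sum_const, nsmul_one]

lemma sum_Icc_mul_Y_add_sum_Icc_mul_Y {i r : ℕ} (hi : i ≤ r) :
    (∑ j ∈ Icc 1 i, x j) * Y i i + ∑ j ∈ Icc (i + 1) r, x i * Y i j
      = x i * (∑ j ∈ Icc 1 r, x j - ((r - i : ℕ) : MvPolynomial ℕ ℤ)) := by
  have hY : ∀ j ∈ Icc (i + 1) r, x i * Y i j = x i * (x j - 1) := fun j hj => by
    rw [Y, if_neg (by simp at hj; omega)]
  rw [sum_congr rfl hY, Y, if_pos rfl, sum_Icc_mul_add_sum_Icc_mul_sub_one x hi]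

/-- **Specialization of the edge-weighted hook formula.**  Under the
substitution `y_{v,u} = x_u - 1` (for `v < u`) and `y_{u,u} = x_u`, the
left-hand side of the edge-weighted hook formula becomes the left-hand side of
the hook summation formula `∑_{T∈U_r} ∏_{v=2}^r x_{f_T(v)}((∑_{u∈h_T(v)} x_u) -
h_T(v) + 1)`, and its right-hand side evaluates to
`x_1 ⋯ x_r (x_1 + ⋯ + x_r - 1)_{r-2}`. -/
theorem edge_weighted_hook_formula_specializes (r : ℕ) (hr : 2 ≤ r) :
    (∑ T : IncTree r,
        ∏ v ∈ Finset.univ.filter (fun v : Fin r => v.val ≠ 0),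
          x ((T.val v).val + 1) * ∑ u ∈ hook T.val v, Y (v.val + 1) (u.val + 1)
      = ∑ T : IncTree r,
        ∏ v ∈ Finset.univ.filter (fun v : Fin r => v.val ≠ 0),
          x ((T.val v).val + 1) *
            ((∑ u ∈ hook T.val v, x (u.val + 1)) -
              ((hook T.val v).card : MvPolynomial ℕ ℤ) + 1)) ∧
    (x 1 * Y r r *
        ∏ i ∈ Finset.Icc 2 (r - 1),
          ((∑ j ∈ Finset.Icc 1 i, x j) * Y i i +
            ∑ j ∈ Finset.Icc (i + 1) r, x i * Y i j)
      = (∏ i ∈ Finset.Icc 1 r, x i) *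
          ∏ j ∈ Finset.range (r - 2),
            ((∑ i ∈ Finset.Icc 1 r, x i) - 1 - (j : MvPolynomial ℕ ℤ))) := by
  refine ⟨sum_congr rfl fun T _ => prod_congr rfl fun v _ => ?_, ?_⟩
  · rw [sum_Y_eq_sum_x_sub_card_add_one (mem_hook_self T.val v)]
  · set S := ∑ i ∈ Icc 1 r, x i
    have hfactor := fun i (hi : i ∈ Icc 2 (r - 1)) =>
      sum_Icc_mul_Y_add_sum_Icc_mul_Y ((mem_Icc.mp hi).2.trans (Nat.sub_le r 1))
    rw [prod_congr rfl hfactor, prod_mul_distrib,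
      prod_Icc_two_sub_eq_prod_range (fun n => S - (n : MvPolynomial ℕ ℤ)),
      prod_Icc_one_eq_mul_mul_prod_Icc_two x hr, Y, if_pos rfl]
    simp only [Nat.cast_add_one, sub_add_eq_sub_sub_swap]
    ring
end

section
/- Let T_1 and T_2 be unordered increasing trees with disjoint finite vertex sets of positive integers, let v_1 be a vertex of T_1 and v_2 a vertex of T_2 with v_1 > v_2, and let R = splice(T_1, v_1; T_2, v_2). Then for ℓ ∈ {1,2} and any two vertices i, j of T_ℓ, vertex i is an ancestor of j in T_ℓ if and only if i is an ancestor of j in R. -/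
open scoped Classical

/-- An unordered increasing tree on a finite set of positive integers,
given by its vertex set and parent function: the root is the minimum vertex
and is fixed by `parent`, and every nonroot vertex has a parent in the tree
with strictly smaller label (so labels increase away from the root). -/
structure ITree : Type where
  verts : Finset ℕ
  parent : ℕ → ℕ
  pos : ∀ v ∈ verts, 0 < v
  parent_root : ∀ v ∈ verts, (∀ u ∈ verts, v ≤ u) → parent v = v
  parent_lt : ∀ v ∈ verts, ¬(∀ u ∈ verts, v ≤ u) → parent v ∈ verts ∧ parent v < v

/-- `a` is an ancestor of `v` in `T` (this includes `a = v`): some iterate of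
the parent function sends `v` to `a`. -/
def Ancestor (T : ITree) (a v : ℕ) : Prop := ∃ k : ℕ, T.parent^[k] v = a

/-- The chain from the root of `T` to `v`: the set of ancestors of `v`. -/
noncomputable def chain (T : ITree) (v : ℕ) : Finset ℕ :=
  T.verts.filter (fun a => Ancestor T a v)

/-- The number of sons of the vertex `i` in `T`. -/
noncomputable def sons (T : ITree) (i : ℕ) : ℕ :=
  (T.verts.filter (fun v => v ≠ i ∧ T.parent v = i)).card

/-- `R = splice(T₁, v₁; T₂, v₂)`: the increasing tree on the union of the
vertex sets obtained by merging the chain from the root of `T₁` to `v₁` with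
the chain from the root of `T₂` to `v₂` into a single increasing chain
(each chain vertex having as parent its predecessor in the merged chain),
all other vertices keeping their parent.  This is exactly the interleaving of
the `v₁`-decomposition of `T₁` and the `v₂`-decomposition of `T₂` so that the
roots along the resulting chain increase. -/
def IsSplice (T₁ : ITree) (v₁ : ℕ) (T₂ : ITree) (v₂ : ℕ) (R : ITree) : Prop :=
  R.verts = T₁.verts ∪ T₂.verts ∧
  (∀ w ∈ T₁.verts, w ∉ chain T₁ v₁ ∪ chain T₂ v₂ → R.parent w = T₁.parent w) ∧
  (∀ w ∈ T₂.verts, w ∉ chain T₁ v₁ ∪ chain T₂ v₂ → R.parent w = T₂.parent w) ∧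
  (∀ w ∈ chain T₁ v₁ ∪ chain T₂ v₂,
    ∀ h : ((chain T₁ v₁ ∪ chain T₂ v₂).filter (· < w)).Nonempty,
      R.parent w = ((chain T₁ v₁ ∪ chain T₂ v₂).filter (· < w)).max' h)

/-!
Off the merged chain `C`, the splice changes no parent, and along `C` the ancestors of a vertex
`w` in `R` are exactly the elements of `C` below `w`. The vertices of `T₁` lying in `C` form the
chain of `v₁` in `T₁`, whose `T₁`-ancestors are likewise its elements below them; so the two
ancestor relations agree on chain vertices, and by strong induction on the label they agree
everywhere else, since there `R` and `T₁` move to the same parent.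
-/

theorem Ancestor.refl (T : ITree) (v : ℕ) : Ancestor T v v := ⟨0, rfl⟩

theorem Ancestor.trans {T : ITree} {a b c : ℕ} (hab : Ancestor T a b) (hbc : Ancestor T b c) :
    Ancestor T a c := by
  obtain ⟨k, rfl⟩ := hab
  obtain ⟨m, rfl⟩ := hbc
  exact ⟨k + m, Function.iterate_add_apply _ _ _ _⟩

theorem ancestor_parent (T : ITree) (v : ℕ) : Ancestor T (T.parent v) v := ⟨1, rfl⟩

theorem ancestor_iff_eq_or_ancestor_parent {T : ITree} {a v : ℕ} :
    Ancestor T a v ↔ a = v ∨ Ancestor T a (T.parent v) := by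
  constructor
  · rintro ⟨_ | k, rfl⟩
    · exact Or.inl rfl
    · exact Or.inr ⟨k, (Function.iterate_succ_apply _ _ _).symm⟩
  · rintro (rfl | h)
    · exact Ancestor.refl T a
    · exact h.trans (ancestor_parent T v)

namespace ITree

theorem parent_mem_and_le (T : ITree) {v : ℕ} (hv : v ∈ T.verts) :
    T.parent v ∈ T.verts ∧ T.parent v ≤ v := by
  by_cases hroot : ∀ u ∈ T.verts, v ≤ u
  · rw [T.parent_root v hv hroot]
    exact ⟨hv, le_rfl⟩
  · obtain ⟨hmem, hlt⟩ := T.parent_lt v hv hroot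
    exact ⟨hmem, hlt.le⟩

theorem min'_ancestor (T : ITree) {v : ℕ} (hv : v ∈ T.verts) :
    Ancestor T (T.verts.min' ⟨v, hv⟩) v := by
  induction v using Nat.strong_induction_on with
  | _ v ih =>
    by_cases hroot : ∀ u ∈ T.verts, v ≤ u
    · rw [le_antisymm (T.verts.min'_le v hv) (hroot _ (T.verts.min'_mem _))]
      exact Ancestor.refl T v
    · obtain ⟨hmem, hlt⟩ := T.parent_lt v hv hroot
      exact (ih _ hlt hmem).trans (ancestor_parent T v)

end ITree

theorem Ancestor.mem_and_le {T : ITree} {a v : ℕ} (h : Ancestor T a v) (hv : v ∈ T.verts) :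
    a ∈ T.verts ∧ a ≤ v := by
  obtain ⟨k, rfl⟩ := h
  induction k with
  | zero => exact ⟨hv, le_rfl⟩
  | succ k ih =>
    rw [Function.iterate_succ_apply']
    obtain ⟨hmem, hle⟩ := T.parent_mem_and_le ih.1
    exact ⟨hmem, hle.trans ih.2⟩

theorem Ancestor.total {T : ITree} {a b v : ℕ} (ha : Ancestor T a v) (hb : Ancestor T b v) :
    Ancestor T a b ∨ Ancestor T b a := by
  obtain ⟨k, rfl⟩ := ha
  obtain ⟨m, rfl⟩ := hb
  rcases le_total k m with h | h
  · exact Or.inr ⟨m - k, by rw [← Function.iterate_add_apply, Nat.sub_add_cancel h]⟩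
  · exact Or.inl ⟨k - m, by rw [← Function.iterate_add_apply, Nat.sub_add_cancel h]⟩

theorem min'_mem_chain (T : ITree) {v : ℕ} (hv : v ∈ T.verts) :
    T.verts.min' ⟨v, hv⟩ ∈ chain T v :=
  Finset.mem_filter.2 ⟨T.verts.min'_mem _, T.min'_ancestor hv⟩

theorem ancestor_iff_mem_chain_and_le {T : ITree} {v a w : ℕ} (hw : w ∈ chain T v) :
    Ancestor T a w ↔ a ∈ chain T v ∧ a ≤ w := by
  obtain ⟨hwT, hwv⟩ := Finset.mem_filter.1 hw
  constructor
  · intro haw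
    obtain ⟨haT, haw_le⟩ := haw.mem_and_le hwT
    exact ⟨Finset.mem_filter.2 ⟨haT, haw.trans hwv⟩, haw_le⟩
  · rintro ⟨ha, haw_le⟩
    obtain ⟨haT, hav⟩ := Finset.mem_filter.1 ha
    rcases hav.total hwv with h | h
    · exact h
    · rw [le_antisymm haw_le (h.mem_and_le haT).2]
      exact Ancestor.refl T w

theorem ancestor_iff_of_predecessor {T : ITree} {C : Finset ℕ}
    (hpred : ∀ w ∈ C, ∀ h : (C.filter (· < w)).Nonempty,
      T.parent w = (C.filter (· < w)).max' h)
    (hmin : ∀ w ∈ C, (∀ c ∈ C, w ≤ c) → T.parent w = w) {a w : ℕ} (hw : w ∈ C) :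
    Ancestor T a w ↔ a ∈ C ∧ a ≤ w := by
  constructor
  · rintro ⟨k, rfl⟩
    induction k with
    | zero => exact ⟨hw, le_rfl⟩
    | succ k ih =>
      rw [Function.iterate_succ_apply']
      set x := T.parent^[k] w
      by_cases hne : (C.filter (· < x)).Nonempty
      · obtain ⟨hmem, hlt⟩ := Finset.mem_filter.1 ((C.filter (· < x)).max'_mem hne)
        rw [hpred x ih.1 hne]
        exact ⟨hmem, hlt.le.trans ih.2⟩
      · have hle : ∀ c ∈ C, x ≤ c := fun c hc =>
          not_lt.1 fun hcx => hne ⟨c, Finset.mem_filter.2 ⟨hc, hcx⟩⟩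
        rw [hmin x ih.1 hle]
        exact ih
  · rintro ⟨ha, haw⟩
    induction w using Nat.strong_induction_on with
    | _ w ih =>
      rcases haw.eq_or_lt with rfl | hlt
      · exact Ancestor.refl T a
      · have ha' : a ∈ C.filter (· < w) := Finset.mem_filter.2 ⟨ha, hlt⟩
        obtain ⟨hmem, hpw⟩ := Finset.mem_filter.1 ((C.filter (· < w)).max'_mem ⟨a, ha'⟩)
        refine (ih _ hpw hmem ((C.filter (· < w)).le_max' a ha')).trans ?_
        rw [← hpred w hw ⟨a, ha'⟩]
        exact ancestor_parent T w

theorem ancestor_iff_of_splice {T A R : ITree} {v u : ℕ} (hdisj : Disjoint T.verts A.verts)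
    (hv : v ∈ T.verts) (hu : u ∈ A.verts) (hverts : R.verts = T.verts ∪ A.verts)
    (hoff : ∀ w ∈ T.verts, w ∉ chain T v ∪ chain A u → R.parent w = T.parent w)
    (hchain : ∀ w ∈ chain T v ∪ chain A u,
      ∀ h : ((chain T v ∪ chain A u).filter (· < w)).Nonempty,
        R.parent w = ((chain T v ∪ chain A u).filter (· < w)).max' h)
    {i j : ℕ} (hi : i ∈ T.verts) (hj : j ∈ T.verts) :
    Ancestor T i j ↔ Ancestor R i j := by
  set C := chain T v ∪ chain A u
  have hrootT := min'_mem_chain T hv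
  have hrootA := min'_mem_chain A hu
  have hmem_C : ∀ {w}, w ∈ T.verts → (w ∈ C ↔ w ∈ chain T v) := fun hw =>
    ⟨fun h => (Finset.mem_union.1 h).resolve_right fun hA =>
      Finset.disjoint_left.1 hdisj hw (Finset.filter_subset _ _ hA), Finset.mem_union_left _⟩
  have hR_root : ∀ w ∈ C, (∀ c ∈ C, w ≤ c) → R.parent w = w := by
    intro w hw hle
    have hwR : w ∈ R.verts := by
      rw [hverts]
      exact Finset.union_subset_union (Finset.filter_subset _ _) (Finset.filter_subset _ _) hw
    refine R.parent_root w hwR fun y hy => ?_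
    rcases Finset.mem_union.1 (hverts ▸ hy) with hy | hy
    · exact (hle _ (Finset.mem_union_left _ hrootT)).trans (T.verts.min'_le y hy)
    · exact (hle _ (Finset.mem_union_right _ hrootA)).trans (A.verts.min'_le y hy)
  induction j using Nat.strong_induction_on with
  | _ j ih =>
    by_cases hjC : j ∈ C
    · rw [ancestor_iff_of_predecessor hchain hR_root hjC,
        ancestor_iff_mem_chain_and_le ((hmem_C hj).1 hjC), hmem_C hi]
    · -- the root of `T` lies on `C`, so `j` is not the root
      have hnroot : ¬∀ y ∈ T.verts, j ≤ y := fun hle =>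
        hjC (Finset.mem_union_left _
          (le_antisymm (T.verts.min'_le j hj) (hle _ (T.verts.min'_mem _)) ▸ hrootT))
      obtain ⟨hpmem, hplt⟩ := T.parent_lt j hj hnroot
      rw [ancestor_iff_eq_or_ancestor_parent, ancestor_iff_eq_or_ancestor_parent (T := R),
        hoff j hj hjC]
      exact or_congr_right (ih _ hplt hpmem)

theorem splice_preserves_ancestors_general (T₁ T₂ R : ITree) (v₁ v₂ : ℕ)
    (hdisj : Disjoint T₁.verts T₂.verts)
    (hv₁ : v₁ ∈ T₁.verts) (hv₂ : v₂ ∈ T₂.verts)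
    (hspl : IsSplice T₁ v₁ T₂ v₂ R) :
    (∀ i ∈ T₁.verts, ∀ j ∈ T₁.verts, (Ancestor T₁ i j ↔ Ancestor R i j)) ∧
    (∀ i ∈ T₂.verts, ∀ j ∈ T₂.verts, (Ancestor T₂ i j ↔ Ancestor R i j)) := by
  obtain ⟨hverts, hoff₁, hoff₂, hchain⟩ := hspl
  refine ⟨fun i hi j hj => ancestor_iff_of_splice hdisj hv₁ hv₂ hverts hoff₁ hchain hi hj,
    fun i hi j hj => ?_⟩
  rw [Finset.union_comm] at hverts hoff₂ hchain
  exact ancestor_iff_of_splice hdisj.symm hv₂ hv₁ hverts hoff₂ hchain hi hj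

/-- **Lemma 2.4(a) of Féray–Goulden–Lascoux (ancestor preservation).**
Let `T₁`, `T₂` be unordered increasing trees with disjoint vertex sets,
`v₁` a vertex of `T₁` and `v₂` a vertex of `T₂` with `v₁ > v₂`, and let
`R = splice(T₁, v₁; T₂, v₂)`.  Then for `ℓ ∈ {1,2}` and any two vertices
`i, j` of `T_ℓ`, `i` is an ancestor of `j` in `T_ℓ` if and only if `i` is an
ancestor of `j` in `R`. -/
theorem splice_preserves_ancestors (T₁ T₂ R : ITree) (v₁ v₂ : ℕ)
    (hdisj : Disjoint T₁.verts T₂.verts)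
    (hv₁ : v₁ ∈ T₁.verts) (hv₂ : v₂ ∈ T₂.verts) (hlt : v₂ < v₁)
    (hspl : IsSplice T₁ v₁ T₂ v₂ R) :
    (∀ i ∈ T₁.verts, ∀ j ∈ T₁.verts, (Ancestor T₁ i j ↔ Ancestor R i j)) ∧
    (∀ i ∈ T₂.verts, ∀ j ∈ T₂.verts, (Ancestor T₂ i j ↔ Ancestor R i j)) :=
  splice_preserves_ancestors_general T₁ T₂ R v₁ v₂ hdisj hv₁ hv₂ hspl
end

section
/- The splice operation is vertex-set recoverable: if R = splice(T_1, v_1; T_2, v_2) with v_1 the maximum vertex of T_1, then given R, the vertex set V(T_1), and V(T_2) = V(R) \ V(T_1), the trees T_1 and T_2 and the vertex v_2 are uniquely determined; specifically, v_2 is the first element of V(T_2) on the chain from v_1 to the root of R, and T_1, T_2 are determined by their v_1- and v_2-decompositions, which are the pieces of the v_1-decomposition of R with roots in V(T_1), respectively V(T_2). -/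
/-!
In `R` the ancestors of `v₁` are exactly the merged chain `chain T₁ v₁ ∪ chain T₂ v₂`, so `R`
determines the merged chain, and intersecting it with the disjoint vertex sets recovers each
chain separately, hence `v₂` as the top of the second one. On a chain the parent of a vertex
is its predecessor on that chain, and off the chains both trees agree with `R`, so the parent
functions of `T₁` and `T₂` are recovered as well.
-/

open scoped Classical

theorem exists_iterate_eq_of_eq_max'_lt {α : Type*} [LinearOrder α] [WellFoundedLT α]
    {M : Finset α} {f : α → α}
    (hf : ∀ w ∈ M, ∀ h : (M.filter (· < w)).Nonempty, f w = (M.filter (· < w)).max' h)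
    {v : α} (hv : v ∈ M) {m : α} (hm : m ∈ M) (hmv : m ≤ v) : ∃ k, f^[k] v = m := by
  induction v using WellFoundedLT.induction with
  | _ v ih =>
    rcases hmv.eq_or_lt with rfl | hmv
    · exact ⟨0, rfl⟩
    have hne : (M.filter (· < v)).Nonempty := ⟨m, Finset.mem_filter.2 ⟨hm, hmv⟩⟩
    obtain ⟨hpM, hpv⟩ := Finset.mem_filter.1 (Finset.max'_mem _ hne)
    have hmp : m ≤ (M.filter (· < v)).max' hne :=
      Finset.le_max' _ m (Finset.mem_filter.2 ⟨hm, hmv⟩)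
    obtain ⟨k, hk⟩ := ih _ hpv hpM hmp
    exact ⟨k + 1, by rw [Function.iterate_succ_apply, hf v hv hne, hk]⟩

namespace ITree

variable (T : ITree) {v w a : ℕ}

theorem iterate_parent_mem (hv : v ∈ T.verts) (k : ℕ) : T.parent^[k] v ∈ T.verts := by
  induction k with
  | zero => exact hv
  | succ k ih =>
    rw [Function.iterate_succ_apply']
    by_cases hroot : ∀ u ∈ T.verts, T.parent^[k] v ≤ u
    · rwa [T.parent_root _ ih hroot]
    · exact (T.parent_lt _ ih hroot).1

theorem parent_le (hv : v ∈ T.verts) : T.parent v ≤ v := by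
  by_cases hroot : ∀ u ∈ T.verts, v ≤ u
  · rw [T.parent_root _ hv hroot]
  · exact (T.parent_lt _ hv hroot).2.le

theorem iterate_parent_le (hv : v ∈ T.verts) (k : ℕ) : T.parent^[k] v ≤ v := by
  induction k with
  | zero => exact le_rfl
  | succ k ih =>
    rw [Function.iterate_succ_apply']
    exact (T.parent_le (T.iterate_parent_mem hv k)).trans ih

theorem ancestor_of_isRoot {r : ℕ} (hr : ∀ u ∈ T.verts, r ≤ u) (hrT : r ∈ T.verts)
    (hw : w ∈ T.verts) : Ancestor T r w := by
  induction w using Nat.strong_induction_on with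
  | _ w ih =>
    by_cases hroot : ∀ u ∈ T.verts, w ≤ u
    · exact ⟨0, le_antisymm (hroot r hrT) (hr w hw)⟩
    · obtain ⟨hp, hpw⟩ := T.parent_lt _ hw hroot
      obtain ⟨k, hk⟩ := ih _ hpw hp
      exact ⟨k + 1, by rwa [Function.iterate_succ_apply]⟩

theorem ancestor_parent_of_lt {c : ℕ} (hv : v ∈ T.verts) (ha : Ancestor T a v)
    (hc : Ancestor T c v) (hca : c < a) : Ancestor T c (T.parent a) := by
  obtain ⟨j, rfl⟩ := ha
  obtain ⟨k, rfl⟩ := hc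
  rcases lt_or_ge j k with hjk | hkj
  · obtain ⟨e, rfl⟩ := Nat.exists_eq_add_of_lt hjk
    refine ⟨e, ?_⟩
    rw [← Function.iterate_succ_apply' T.parent j, ← Function.iterate_add_apply]
    congr 1
    omega
  · obtain ⟨e, rfl⟩ := Nat.exists_eq_add_of_le hkj
    rw [add_comm, Function.iterate_add_apply] at hca
    exact absurd (T.iterate_parent_le (T.iterate_parent_mem hv k) e) hca.not_ge

theorem chain_subset_verts : chain T v ⊆ T.verts := Finset.filter_subset _ _

theorem mem_chain_of_ancestor (hv : v ∈ T.verts) (ha : Ancestor T a v) : a ∈ chain T v := by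
  obtain ⟨k, rfl⟩ := ha
  exact Finset.mem_filter.2 ⟨T.iterate_parent_mem hv k, k, rfl⟩

theorem mem_chain_self (hv : v ∈ T.verts) : v ∈ chain T v :=
  T.mem_chain_of_ancestor hv ⟨0, rfl⟩

theorem le_of_mem_chain (hv : v ∈ T.verts) (ha : a ∈ chain T v) : a ≤ v := by
  obtain ⟨-, k, rfl⟩ := Finset.mem_filter.1 ha
  exact T.iterate_parent_le hv k

theorem exists_root_mem_chain (hv : v ∈ T.verts) :
    ∃ r ∈ chain T v, ∀ u ∈ T.verts, r ≤ u :=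
  ⟨T.verts.min' ⟨v, hv⟩,
    T.mem_chain_of_ancestor hv
      (T.ancestor_of_isRoot (fun u hu => T.verts.min'_le u hu) (T.verts.min'_mem _) hv),
    fun u hu => T.verts.min'_le u hu⟩

theorem isGreatest_parent (hv : v ∈ T.verts) (hw : w ∈ chain T v)
    (hroot : ¬ ∀ u ∈ T.verts, w ≤ u) :
    IsGreatest {c | c ∈ chain T v ∧ c < w} (T.parent w) := by
  obtain ⟨-, hwv⟩ := Finset.mem_filter.1 hw
  obtain ⟨hp, hpw⟩ := T.parent_lt _ (T.chain_subset_verts hw) hroot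
  have hpv : Ancestor T (T.parent w) v := by
    obtain ⟨k, rfl⟩ := hwv
    exact ⟨k + 1, Function.iterate_succ_apply' _ _ _⟩
  refine ⟨⟨T.mem_chain_of_ancestor hv hpv, hpw⟩, fun c ⟨hc, hcw⟩ => ?_⟩
  obtain ⟨k, rfl⟩ := T.ancestor_parent_of_lt hv hwv (Finset.mem_filter.1 hc).2 hcw
  exact T.iterate_parent_le hp k

theorem parent_eq_of_chain_eq {T' : ITree} {v' : ℕ} (hverts : T'.verts = T.verts)
    (hv' : v' ∈ T'.verts) (hv : v ∈ T.verts) (hchain : chain T' v' = chain T v)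
    (hoff : ∀ w ∈ T.verts, w ∉ chain T v → T'.parent w = T.parent w) :
    ∀ w ∈ T.verts, T'.parent w = T.parent w := by
  intro w hw
  by_cases hwc : w ∈ chain T v
  · by_cases hroot : ∀ u ∈ T.verts, w ≤ u
    · rw [T.parent_root w hw hroot, T'.parent_root w (hverts ▸ hw) (hverts ▸ hroot)]
    · have h' := T'.isGreatest_parent hv' (hchain ▸ hwc) (hverts ▸ hroot)
      rw [hchain] at h'
      exact h'.unique (T.isGreatest_parent hv hwc hroot)
  · exact hoff w hw hwc

theorem eq_of_chain_eq {T' : ITree} {v' : ℕ} (hv' : v' ∈ T'.verts) (hv : v ∈ T.verts)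
    (hchain : chain T' v' = chain T v) : v' = v :=
  le_antisymm (T.le_of_mem_chain hv (hchain ▸ T'.mem_chain_self hv'))
    (T'.le_of_mem_chain hv' (hchain ▸ T.mem_chain_self hv))

end ITree

section Splice

variable {T₁ T₂ R : ITree} {v₁ v₂ : ℕ}

theorem chain_union_inter_left (hdisj : Disjoint T₁.verts T₂.verts) :
    (chain T₁ v₁ ∪ chain T₂ v₂) ∩ T₁.verts = chain T₁ v₁ := by
  rw [Finset.union_inter_distrib_right, Finset.inter_eq_left.2 T₁.chain_subset_verts,
    Finset.disjoint_iff_inter_eq_empty.1 (hdisj.symm.mono_left T₂.chain_subset_verts),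
    Finset.union_empty]

theorem chain_union_inter_right (hdisj : Disjoint T₁.verts T₂.verts) :
    (chain T₁ v₁ ∪ chain T₂ v₂) ∩ T₂.verts = chain T₂ v₂ := by
  rw [Finset.union_comm, chain_union_inter_left hdisj.symm]

namespace IsSplice

theorem parent_left (hspl : IsSplice T₁ v₁ T₂ v₂ R) (hdisj : Disjoint T₁.verts T₂.verts)
    {w : ℕ} (hw : w ∈ T₁.verts) (hwc : w ∉ chain T₁ v₁) : R.parent w = T₁.parent w :=
  hspl.2.1 w hw fun h => (Finset.mem_union.1 h).elim hwc
    fun h₂ => Finset.disjoint_left.1 hdisj hw (T₂.chain_subset_verts h₂)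

theorem parent_right (hspl : IsSplice T₁ v₁ T₂ v₂ R) (hdisj : Disjoint T₁.verts T₂.verts)
    {w : ℕ} (hw : w ∈ T₂.verts) (hwc : w ∉ chain T₂ v₂) : R.parent w = T₂.parent w :=
  hspl.2.2.1 w hw fun h => (Finset.mem_union.1 h).elim
    (fun h₁ => Finset.disjoint_right.1 hdisj hw (T₁.chain_subset_verts h₁)) hwc

theorem mapsTo_parent (hspl : IsSplice T₁ v₁ T₂ v₂ R) (hv₁ : v₁ ∈ T₁.verts)
    (hv₂ : v₂ ∈ T₂.verts) :
    Set.MapsTo R.parent ↑(chain T₁ v₁ ∪ chain T₂ v₂) ↑(chain T₁ v₁ ∪ chain T₂ v₂) := by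
  intro m hm
  set M := chain T₁ v₁ ∪ chain T₂ v₂
  by_cases hne : (M.filter (· < m)).Nonempty
  · rw [hspl.2.2.2 m hm hne]
    exact Finset.mem_of_mem_filter _ (Finset.max'_mem _ hne)
  -- `m` is the least element of the merged chain, which contains both roots
  have hmin : ∀ c ∈ M, m ≤ c := fun c hc =>
    not_lt.1 fun hcm => hne ⟨c, Finset.mem_filter.2 ⟨hc, hcm⟩⟩
  obtain ⟨r₁, hr₁, hr₁min⟩ := T₁.exists_root_mem_chain hv₁
  obtain ⟨r₂, hr₂, hr₂min⟩ := T₂.exists_root_mem_chain hv₂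
  have hroot : ∀ u ∈ R.verts, m ≤ u := by
    intro u hu
    rw [hspl.1, Finset.mem_union] at hu
    rcases hu with hu | hu
    · exact (hmin r₁ (Finset.mem_union_left _ hr₁)).trans (hr₁min u hu)
    · exact (hmin r₂ (Finset.mem_union_right _ hr₂)).trans (hr₂min u hu)
  have hmR : m ∈ R.verts := by
    rw [hspl.1]
    exact Finset.union_subset_union T₁.chain_subset_verts T₂.chain_subset_verts hm
  rwa [R.parent_root m hmR hroot]

theorem ancestor_iff (hspl : IsSplice T₁ v₁ T₂ v₂ R) (hv₁ : v₁ ∈ T₁.verts)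
    (hv₂ : v₂ ∈ T₂.verts) (hlt : v₂ < v₁) {a : ℕ} :
    Ancestor R a v₁ ↔ a ∈ chain T₁ v₁ ∪ chain T₂ v₂ := by
  have hv₁M : v₁ ∈ chain T₁ v₁ ∪ chain T₂ v₂ := Finset.mem_union_left _ (T₁.mem_chain_self hv₁)
  constructor
  · rintro ⟨k, rfl⟩
    exact (hspl.mapsTo_parent hv₁ hv₂).iterate k hv₁M
  · intro ha
    refine exists_iterate_eq_of_eq_max'_lt hspl.2.2.2 hv₁M ha ?_
    rcases Finset.mem_union.1 ha with ha | ha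
    · exact T₁.le_of_mem_chain hv₁ ha
    · exact (T₂.le_of_mem_chain hv₂ ha).trans hlt.le

end IsSplice

end Splice

theorem splice_unique_recovery_general (T₁ T₂ R : ITree) (v₁ v₂ : ℕ)
    (hdisj : Disjoint T₁.verts T₂.verts)
    (hv₁ : v₁ ∈ T₁.verts)
    (hv₂ : v₂ ∈ T₂.verts) (hlt : v₂ < v₁)
    (hspl : IsSplice T₁ v₁ T₂ v₂ R) :
    (∀ (T₁' T₂' : ITree) (v₂' : ℕ),
      T₁'.verts = T₁.verts → T₂'.verts = T₂.verts →
      v₂' ∈ T₂'.verts → v₂' < v₁ → IsSplice T₁' v₁ T₂' v₂' R →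
        (∀ w ∈ T₁.verts, T₁'.parent w = T₁.parent w) ∧
        (∀ w ∈ T₂.verts, T₂'.parent w = T₂.parent w) ∧ v₂' = v₂) ∧
    (Ancestor R v₂ v₁ ∧ ∀ w ∈ T₂.verts, Ancestor R w v₁ → w ≤ v₂) := by
  refine ⟨fun T₁' T₂' v₂' hT₁' hT₂' hv₂' hlt' hspl' => ?_,
    hspl.ancestor_iff hv₁ hv₂ hlt |>.2 (Finset.mem_union_right _ (T₂.mem_chain_self hv₂)),
    fun w hw hwv₁ => T₂.le_of_mem_chain hv₂ ?_⟩
  · have hv₁' : v₁ ∈ T₁'.verts := hT₁' ▸ hv₁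
    have hdisj' : Disjoint T₁'.verts T₂'.verts := hT₁' ▸ hT₂' ▸ hdisj
    have hmerged : chain T₁' v₁ ∪ chain T₂' v₂' = chain T₁ v₁ ∪ chain T₂ v₂ := by
      ext a
      rw [← hspl'.ancestor_iff hv₁' hv₂' hlt', hspl.ancestor_iff hv₁ hv₂ hlt]
    have hC₁ : chain T₁' v₁ = chain T₁ v₁ := by
      rw [← chain_union_inter_left (v₂ := v₂') hdisj', hmerged, hT₁',
        chain_union_inter_left hdisj]
    have hC₂ : chain T₂' v₂' = chain T₂ v₂ := by
      rw [← chain_union_inter_right (v₁ := v₁) hdisj', hmerged, hT₂',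
        chain_union_inter_right hdisj]
    refine ⟨T₁.parent_eq_of_chain_eq hT₁' hv₁' hv₁ hC₁ fun w hw hwc => ?_,
      T₂.parent_eq_of_chain_eq hT₂' hv₂' hv₂ hC₂ fun w hw hwc => ?_,
      T₂.eq_of_chain_eq hv₂' hv₂ hC₂⟩
    · rw [← hspl'.parent_left hdisj' (hT₁' ▸ hw) (hC₁ ▸ hwc), hspl.parent_left hdisj hw hwc]
    · rw [← hspl'.parent_right hdisj' (hT₂' ▸ hw) (hC₂ ▸ hwc), hspl.parent_right hdisj hw hwc]
  · rw [← chain_union_inter_right hdisj]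
    exact Finset.mem_inter.2 ⟨(hspl.ancestor_iff hv₁ hv₂ hlt).1 hwv₁, hw⟩

/-- **Vertex-set recoverability of the splice.**  Suppose
`R = splice(T₁, v₁; T₂, v₂)` where `v₁` is the maximum vertex of `T₁`,
`v₂ ∈ T₂`, `v₂ < v₁`, and the vertex sets are disjoint.  Then, given `R`,
the vertex set `V(T₁)` (and hence `V(T₂) = V(R) \ V(T₁)`), the trees `T₁`,
`T₂` and the vertex `v₂` are uniquely determined: any other splice
decomposition of `R` along `v₁` with the same vertex sets agrees with
`(T₁, T₂, v₂)`.  Specifically, `v₂` is the first element of `V(T₂)` on the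
chain from `v₁` to the root of `R` (the largest element of `V(T₂)` that is an
ancestor of `v₁` in `R`), and `T₁`, `T₂` are determined by their `v₁`- and
`v₂`-decompositions, the pieces of the `v₁`-decomposition of `R` with roots
in `V(T₁)`, resp. `V(T₂)`. -/
theorem splice_unique_recovery (T₁ T₂ R : ITree) (v₁ v₂ : ℕ)
    (hdisj : Disjoint T₁.verts T₂.verts)
    (hv₁ : v₁ ∈ T₁.verts) (hmax : ∀ u ∈ T₁.verts, u ≤ v₁)
    (hv₂ : v₂ ∈ T₂.verts) (hlt : v₂ < v₁)
    (hspl : IsSplice T₁ v₁ T₂ v₂ R) :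
    (∀ (T₁' T₂' : ITree) (v₂' : ℕ),
      T₁'.verts = T₁.verts → T₂'.verts = T₂.verts →
      v₂' ∈ T₂'.verts → v₂' < v₁ → IsSplice T₁' v₁ T₂' v₂' R →
        (∀ w ∈ T₁.verts, T₁'.parent w = T₁.parent w) ∧
        (∀ w ∈ T₂.verts, T₂'.parent w = T₂.parent w) ∧ v₂' = v₂) ∧
    (Ancestor R v₂ v₁ ∧ ∀ w ∈ T₂.verts, Ancestor R w v₁ → w ≤ v₂) :=
  splice_unique_recovery_general T₁ T₂ R v₁ v₂ hdisj hv₁ hv₂ hlt hspl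
end
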